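/- arXiv:1006.0502 — 2 statements merged into one kernel-verified Lean document; each statement's English description precedes it below -/
import Mathlib

section
/- Let k ≥ 1 be an integer, p ∈ [1,2], a ≥ 0, and ε ≥ 0. Then the set Č := {x ∈ ℝ^k : there exist j ∈ {1,…,k} and s ∈ {−1,1} with ⟨x − a s e_j⟩_p ≤ ε} (where e_j is the j-th standard basis vector) is a Schur²-concave set. -/
open MeasureTheory ProbabilityTheory Filter
open scoped ENNReal

noncomputable section

/-- The standard Gaussian measure on `ℝ^k` (the `k`-fold product of `N(0,1)`). -/
def stdGaussianPi (k : ℕ) : MeasureTheory.Measure (Fin k → ℝ) :=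
  MeasureTheory.Measure.pi fun _ => ProbabilityTheory.gaussianReal 0 1

/-- `a` majorizes `b`: the total sums agree and, for every `j`, the sum of the `j`
largest entries of `a` is at least the sum of the `j` largest entries of `b`
(formulated equivalently: every sum of entries of `b` over an index set is dominated by
a sum of entries of `a` over an index set of the same cardinality). -/
def Majorizes {k : ℕ} (a b : Fin k → ℝ) : Prop :=
  (∑ i, a i = ∑ i, b i) ∧
  ∀ s : Finset (Fin k), ∃ t : Finset (Fin k),
    t.card = s.card ∧ ∑ i ∈ s, b i ≤ ∑ i ∈ t, a i

/-- The coordinatewise square `x² = (x₁², …, x_k²)` of a vector. -/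
def sqv {k : ℕ} (x : Fin k → ℝ) : Fin k → ℝ := fun i => (x i) ^ 2

/-- `f` is Schur²-concave: `f x ≤ f y` whenever `x²` majorizes `y²`. -/
def Schur2Concave {k : ℕ} {α : Type*} [Preorder α] (f : (Fin k → ℝ) → α) : Prop :=
  ∀ x y : Fin k → ℝ, Majorizes (sqv x) (sqv y) → f x ≤ f y

/-- `f` is Schur²-convex: `f x ≥ f y` whenever `x²` majorizes `y²`. -/
def Schur2Convex {k : ℕ} {α : Type*} [Preorder α] (f : (Fin k → ℝ) → α) : Prop :=
  ∀ x y : Fin k → ℝ, Majorizes (sqv x) (sqv y) → f y ≤ f x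

/-- A set `A` is Schur²-convex if `x ∈ A` and `y² ⪯ x²` imply `y ∈ A`. -/
def Schur2ConvexSet {k : ℕ} (A : Set (Fin k → ℝ)) : Prop :=
  ∀ x y : Fin k → ℝ, x ∈ A → Majorizes (sqv x) (sqv y) → y ∈ A

/-- A set `A` is Schur²-concave if `x ∈ A` and `y² ⪰ x²` imply `y ∈ A`. -/
def Schur2ConcaveSet {k : ℕ} (A : Set (Fin k → ℝ)) : Prop :=
  ∀ x y : Fin k → ℝ, x ∈ A → Majorizes (sqv y) (sqv x) → y ∈ A

open Classical in
/-- The `p`-mean `⟨x⟩_p` for `p ∈ [-∞, ∞]` (coded as `p : EReal`):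
`⟨x⟩_p = ((1/k) ∑ |x_j|^p)^(1/p)` for real `p ≠ 0`, with `⟨x⟩_p := 0` when `p < 0` and
some `x_j = 0`; `⟨x⟩_0 = ∏ |x_j|^(1/k)`; `⟨x⟩_∞ = max |x_j|`; `⟨x⟩_{-∞} = min |x_j|`. -/
noncomputable def pMean {k : ℕ} (p : EReal) (x : Fin k → ℝ) : ℝ :=
  if p = ⊤ then ⨆ j, |x j|
  else if p = ⊥ then ⨅ j, |x j|
  else if p = 0 then ∏ j, |x j| ^ ((k : ℝ)⁻¹)
  else if p.toReal < 0 ∧ ∃ j, x j = 0 then 0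
  else ((k : ℝ)⁻¹ * ∑ j, |x j| ^ p.toReal) ^ (p.toReal)⁻¹

/-! Subtracting `a s e_i` from `z` changes `∑ |z_l|^p` only in its `i`-th term, from `Z^p` to
`|z_i - a s|^p ≥ |Z - a|^p`, where `Z = |z_i|`, with equality when `s` is the sign of `z_i`; for
`p ≥ 1` the gain `Z^p - |Z - a|^p` is nondecreasing in `Z ≥ 0`. If `y² ⪰ x²`, then
`|x_j| ≤ maxᵢ |y_i|`, and `∑ |y_i|^p ≤ ∑ |x_i|^p` by Karamata's inequality for the concave power
`t ↦ t^(p/2)`. The representation `t^α = c_α ∫₀^∞ min(t, s) s^(α-2) ds` reduces Karamata to the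
functions `min(·, s)`, for which it follows directly from the majorization. So the centre at a
largest coordinate of `y`, with its sign, serves `y` at least as well as `a s e_j` serves `x`. -/

open Set

theorem Real.mul_rpow_sub_one {s : ℝ} (hs : s ≠ 0) (β : ℝ) : s * s ^ (β - 1) = s ^ β := by
  rw [Real.rpow_sub_one hs]
  field_simp

section PowerIntegral

variable {α t : ℝ}

theorem integrableOn_min_mul_rpow_Ioi (hα0 : 0 < α) (hα1 : α < 1) (ht : 0 ≤ t) :
    IntegrableOn (fun s : ℝ => min t s * s ^ (α - 2)) (Ioi 0) := by
  obtain rfl | ht := ht.eq_or_lt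
  · exact integrableOn_zero.congr_fun
      (fun s hs => by simp [min_eq_left (le_of_lt (mem_Ioi.mp hs))])
      measurableSet_Ioi
  rw [← Ioc_union_Ioi_eq_Ioi ht.le]
  refine IntegrableOn.union ?_ ?_
  · have h := intervalIntegral.intervalIntegrable_rpow' (a := 0) (b := t) (r := α - 1)
      (by linarith)
    rw [intervalIntegrable_iff_integrableOn_Ioc_of_le ht.le] at h
    refine h.congr_fun (fun s hs => ?_) measurableSet_Ioc
    rw [min_eq_right hs.2, show α - 2 = α - 1 - 1 by ring, Real.mul_rpow_sub_one hs.1.ne']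
  · have h : IntegrableOn (fun s : ℝ => t * s ^ (α - 2)) (Ioi t) :=
      (integrableOn_Ioi_rpow_of_lt (by linarith) ht).const_mul t
    exact h.congr_fun
      (fun s hs => by rw [min_eq_left (le_of_lt hs)]) measurableSet_Ioi

theorem integral_min_mul_rpow_Ioi (hα0 : 0 < α) (hα1 : α < 1) (ht : 0 ≤ t) :
    ∫ s in Ioi 0, min t s * s ^ (α - 2) = (1 / α + 1 / (1 - α)) * t ^ α := by
  obtain rfl | ht := ht.eq_or_lt
  · rw [Real.zero_rpow hα0.ne', mul_zero]
    exact setIntegral_eq_zero_of_forall_eq_zero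
      fun s hs => by simp [min_eq_left (le_of_lt (mem_Ioi.mp hs))]
  have hint := integrableOn_min_mul_rpow_Ioi hα0 hα1 ht.le
  rw [← Ioc_union_Ioi_eq_Ioi ht.le] at hint ⊢
  rw [setIntegral_union (Ioc_disjoint_Ioi le_rfl) measurableSet_Ioi
    (hint.mono_set subset_union_left) (hint.mono_set subset_union_right)]
  have below : ∫ s in Ioc 0 t, min t s * s ^ (α - 2) = t ^ α / α := by
    rw [setIntegral_congr_fun measurableSet_Ioc (g := fun s : ℝ => s ^ (α - 1)) fun s hs => by
      rw [min_eq_right hs.2, show α - 2 = α - 1 - 1 by ring, Real.mul_rpow_sub_one hs.1.ne']]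
    rw [← intervalIntegral.integral_of_le ht.le, integral_rpow (Or.inl (by linarith)),
      sub_add_cancel, Real.zero_rpow hα0.ne', sub_zero]
  have above : ∫ s in Ioi t, min t s * s ^ (α - 2) = t ^ α / (1 - α) := by
    rw [setIntegral_congr_fun measurableSet_Ioi (g := fun s : ℝ => t * s ^ (α - 2))
      fun s hs => by rw [min_eq_left (le_of_lt hs)]]
    rw [integral_const_mul, integral_Ioi_rpow_of_lt (by linarith) ht,
      show α - 2 + 1 = α - 1 by ring, neg_div, mul_neg, ← mul_div_assoc,
      Real.mul_rpow_sub_one ht.ne', ← div_neg, neg_sub]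
  rw [below, above]
  ring

end PowerIntegral

namespace Majorizes

variable {k : ℕ} {u v : Fin k → ℝ}

theorem exists_le (h : Majorizes u v) (j : Fin k) : ∃ i, v j ≤ u i := by
  obtain ⟨t, hcard, hle⟩ := h.2 {j}
  obtain ⟨i, rfl⟩ := Finset.card_eq_one.mp hcard
  exact ⟨i, by simpa using hle⟩

theorem sum_max_sub_le (h : Majorizes u v) (s : ℝ) :
    ∑ i, max (v i - s) 0 ≤ ∑ i, max (u i - s) 0 := by
  obtain ⟨t, hcard, hle⟩ := h.2 {i | s < v i}
  calc ∑ i, max (v i - s) 0 = ∑ i with s < v i, (v i - s) := by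
        rw [Finset.sum_filter]
        refine Finset.sum_congr rfl fun i _ => ?_
        split_ifs with hi
        · exact max_eq_left (sub_nonneg.mpr hi.le)
        · exact max_eq_right (sub_nonpos.mpr (not_lt.mp hi))
    _ ≤ ∑ i ∈ t, (u i - s) := by
        simp only [Finset.sum_sub_distrib, Finset.sum_const, hcard]
        linarith
    _ ≤ ∑ i ∈ t, max (u i - s) 0 := Finset.sum_le_sum fun i _ => le_max_left _ _
    _ ≤ ∑ i, max (u i - s) 0 :=
        Finset.sum_le_sum_of_subset_of_nonneg (Finset.subset_univ t)
          fun i _ _ => le_max_right _ _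

theorem sum_min_le (h : Majorizes u v) (s : ℝ) :
    ∑ i, min (u i) s ≤ ∑ i, min (v i) s := by
  have split : ∀ w : Fin k → ℝ, ∑ i, min (w i) s = ∑ i, w i - ∑ i, max (w i - s) 0 := by
    intro w
    rw [← Finset.sum_sub_distrib]
    refine Finset.sum_congr rfl fun i _ => ?_
    rcases le_total (w i) s with hw | hw
    · rw [min_eq_left hw, max_eq_right (sub_nonpos.mpr hw), sub_zero]
    · rw [min_eq_right hw, max_eq_left (sub_nonneg.mpr hw), sub_sub_cancel]
  rw [split u, split v, h.1]
  exact sub_le_sub_left (h.sum_max_sub_le s) _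

theorem sum_rpow_le (h : Majorizes u v) (hu : ∀ i, 0 ≤ u i) (hv : ∀ i, 0 ≤ v i) {α : ℝ}
    (hα0 : 0 < α) (hα1 : α ≤ 1) : ∑ i, u i ^ α ≤ ∑ i, v i ^ α := by
  obtain rfl | hα1 := hα1.eq_or_lt
  · simpa using h.1.le
  have hc : 0 < 1 / α + 1 / (1 - α) := by
    have : 0 < 1 - α := by linarith
    positivity
  have integral_eq : ∀ w : Fin k → ℝ, (∀ i, 0 ≤ w i) →
      (1 / α + 1 / (1 - α)) * ∑ i, w i ^ α =
        ∫ s in Ioi 0, ∑ i, min (w i) s * s ^ (α - 2) := by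
    intro w hw
    rw [integral_finsetSum _ fun i _ => integrableOn_min_mul_rpow_Ioi hα0 hα1 (hw i),
      Finset.mul_sum]
    exact Finset.sum_congr rfl fun i _ => (integral_min_mul_rpow_Ioi hα0 hα1 (hw i)).symm
  refine le_of_mul_le_mul_left ?_ hc
  rw [integral_eq u hu, integral_eq v hv]
  refine setIntegral_mono_on
    (integrable_finsetSum _ fun i _ => integrableOn_min_mul_rpow_Ioi hα0 hα1 (hu i))
    (integrable_finsetSum _ fun i _ => integrableOn_min_mul_rpow_Ioi hα0 hα1 (hv i))
    measurableSet_Ioi fun s hs => ?_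
  simp only [← Finset.sum_mul]
  exact mul_le_mul_of_nonneg_right (h.sum_min_le s) (Real.rpow_nonneg (le_of_lt hs) _)

theorem sum_abs_rpow_le_of_sqv {x y : Fin k → ℝ} (h : Majorizes (sqv y) (sqv x)) {p : ℝ}
    (hp0 : 0 < p) (hp2 : p ≤ 2) : ∑ i, |y i| ^ p ≤ ∑ i, |x i| ^ p := by
  have sqv_rpow : ∀ z : ℝ, (z ^ 2) ^ (p / 2) = |z| ^ p := fun z => by
    rw [← sq_abs, ← Real.rpow_natCast, ← Real.rpow_mul (abs_nonneg z)]
    ring_nf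
  simpa only [sqv, sqv_rpow] using
    h.sum_rpow_le (fun i => sq_nonneg _) (fun i => sq_nonneg _) (α := p / 2)
      (by linarith) (by linarith)

end Majorizes

section PowerGain

variable {p a : ℝ}

theorem monotoneOn_rpow_sub_rpow_sub (hp : 1 ≤ p) (ha : 0 ≤ a) :
    MonotoneOn (fun X : ℝ => X ^ p - (X - a) ^ p) (Ici a) := by
  have hdiff : Differentiable ℝ fun X : ℝ => X ^ p - (X - a) ^ p :=
    (Real.differentiable_rpow_const hp).sub
      ((Real.differentiable_rpow_const hp).comp (differentiable_id.sub_const a))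
  refine monotoneOn_of_deriv_nonneg (convex_Ici a) hdiff.continuous.continuousOn
    hdiff.differentiableOn fun X hX => ?_
  rw [interior_Ici, mem_Ioi] at hX
  have hderiv : HasDerivAt (fun X : ℝ => X ^ p - (X - a) ^ p)
      (1 * p * X ^ (p - 1) - 1 * p * (X - a) ^ (p - 1)) X :=
    ((hasDerivAt_id X).rpow_const (Or.inr hp)).sub
      (((hasDerivAt_id X).sub_const a).rpow_const (Or.inr hp))
  rw [hderiv.deriv, one_mul, ← mul_sub]
  exact mul_nonneg (by linarith)
    (sub_nonneg.mpr (Real.rpow_le_rpow (by linarith) (by linarith) (by linarith)))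

theorem monotoneOn_rpow_sub_abs_sub_rpow (hp : 1 ≤ p) (ha : 0 ≤ a) :
    MonotoneOn (fun X : ℝ => X ^ p - |X - a| ^ p) (Ici 0) := by
  rw [← Icc_union_Ici_eq_Ici ha]
  refine MonotoneOn.union_right (fun X hX Y hY hXY => ?_) (fun X hX Y hY hXY => ?_)
    (isGreatest_Icc ha) isLeast_Ici
  · rw [mem_Icc] at hX hY
    simp only [abs_of_nonpos (sub_nonpos.mpr hX.2), abs_of_nonpos (sub_nonpos.mpr hY.2), neg_sub]
    have pow_le : X ^ p ≤ Y ^ p := Real.rpow_le_rpow hX.1 hXY (by linarith)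
    have sub_pow_le : (a - Y) ^ p ≤ (a - X) ^ p :=
      Real.rpow_le_rpow (by linarith) (by linarith) (by linarith)
    linarith
  · rw [mem_Ici] at hX hY
    simp only [abs_of_nonneg (sub_nonneg.mpr hX), abs_of_nonneg (sub_nonneg.mpr hY)]
    exact monotoneOn_rpow_sub_rpow_sub hp ha hX hY hXY

end PowerGain

theorem pMean_coe_of_pos {k : ℕ} {p : ℝ} (hp : 0 < p) (z : Fin k → ℝ) :
    pMean (p : EReal) z = ((k : ℝ)⁻¹ * ∑ j, |z j| ^ p) ^ p⁻¹ := by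
  have hp0 : (p : EReal) ≠ 0 := by exact_mod_cast hp.ne'
  simp [pMean, hp0, hp.not_gt]

theorem pMean_le_pMean_of_sum_le {k : ℕ} {p : ℝ} (hp : 0 < p) {x y : Fin k → ℝ}
    (h : ∑ i, |y i| ^ p ≤ ∑ i, |x i| ^ p) : pMean (p : EReal) y ≤ pMean (p : EReal) x := by
  rw [pMean_coe_of_pos hp, pMean_coe_of_pos hp]
  gcongr

theorem sum_comp_sub_mul_ite {k : ℕ} (f : ℝ → ℝ) (z : Fin k → ℝ) (c : ℝ) (j : Fin k) :
    ∑ i, f (z i - c * (if i = j then 1 else 0)) = ∑ i, f (z i) - f (z j) + f (z j - c) := by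
  have hdiff :
      ∑ i, (f (z i - c * (if i = j then 1 else 0)) - f (z i)) = f (z j - c) - f (z j) := by
    rw [Fintype.sum_eq_single j fun i hi => by simp [hi]]
    simp
  rw [Finset.sum_sub_distrib] at hdiff
  linarith

theorem exists_sign_abs_sub_mul_eq (y a : ℝ) :
    ∃ s : ℝ, (s = 1 ∨ s = -1) ∧ |y - a * s| = |(|y| - a)| := by
  rcases le_total 0 y with hy | hy
  · exact ⟨1, .inl rfl, by rw [mul_one, abs_of_nonneg hy]⟩
  · refine ⟨-1, .inr rfl, ?_⟩
    rw [abs_of_nonpos hy, ← abs_neg]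
    ring_nf

theorem abs_abs_sub_le_abs_sub_mul {x a s : ℝ} (ha : 0 ≤ a) (hs : s = 1 ∨ s = -1) :
    |(|x| - a)| ≤ |x - a * s| := by
  have has : |a * s| = a := by rcases hs with rfl | rfl <;> simp [abs_of_nonneg ha]
  simpa only [has] using abs_abs_sub_abs_le_abs_sub x (a * s)

theorem checkB_schur2ConcaveSet_general (k : ℕ) (p : ℝ) (hp1 : 1 ≤ p) (hp2 : p ≤ 2)
    (a : ℝ) (ha : 0 ≤ a) (ε : ℝ) :
    Schur2ConcaveSet {x : Fin k → ℝ |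
      ∃ (j : Fin k) (s : ℝ), (s = 1 ∨ s = -1) ∧
        pMean (p : EReal) (fun i => x i - a * s * (if i = j then 1 else 0)) ≤ ε} := by
  rintro x y ⟨j, s, hs, hx⟩ hmaj
  have : Nonempty (Fin k) := ⟨j⟩
  obtain ⟨m, hm⟩ := Finite.exists_max fun i => |y i|
  obtain ⟨s', hs', hym⟩ := exists_sign_abs_sub_mul_eq (y m) a
  refine ⟨m, s', hs', (pMean_le_pMean_of_sum_le (by linarith) ?_).trans hx⟩
  have hxy : |x j| ≤ |y m| := by
    obtain ⟨i, hi⟩ := hmaj.exists_le j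
    exact (sq_le_sq.mp hi).trans (hm i)
  have gain := monotoneOn_rpow_sub_abs_sub_rpow hp1 ha (abs_nonneg (x j)) (abs_nonneg (y m)) hxy
  have shift : |(|x j| - a)| ^ p ≤ |x j - a * s| ^ p :=
    Real.rpow_le_rpow (abs_nonneg _) (abs_abs_sub_le_abs_sub_mul ha hs) (by linarith)
  rw [sum_comp_sub_mul_ite (|·| ^ p), sum_comp_sub_mul_ite (|·| ^ p), hym]
  linarith [hmaj.sum_abs_rpow_le_of_sqv (by linarith) hp2]

/-- For `p ∈ [1,2]`, `a ≥ 0`, `ε ≥ 0`, the set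
`Č = {x : ∃ j, ∃ s ∈ {-1,1}, ⟨x - a s e_j⟩_p ≤ ε}` is a Schur²-concave set. -/
theorem checkB_schur2ConcaveSet (k : ℕ) (hk : 1 ≤ k) (p : ℝ) (hp1 : 1 ≤ p) (hp2 : p ≤ 2)
    (a : ℝ) (ha : 0 ≤ a) (ε : ℝ) (hε : 0 ≤ ε) :
    Schur2ConcaveSet {x : Fin k → ℝ |
      ∃ (j : Fin k) (s : ℝ), (s = 1 ∨ s = -1) ∧
        pMean (p : EReal) (fun i => x i - a * s * (if i = j then 1 else 0)) ≤ ε} :=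
  checkB_schur2ConcaveSet_general k p hp1 hp2 a ha ε
end
end

section
/- Let k ≥ 1 be an integer and ℓ ∈ {1,…,k}. For x ∈ ℝ^k, let ⟨x⟩_{ℓ,↑;p} denote the p-mean (taken in ℝ^ℓ) of the vector whose coordinates are the ℓ smallest of the absolute values |x₁|,…,|x_k|, and let ⟨x⟩_{ℓ,↓;p} denote the p-mean of the vector whose coordinates are the ℓ largest of these absolute values. Then ⟨·⟩_{ℓ,↑;p} is Schur²-concave on ℝ^k for every p ∈ [−∞, 2], and ⟨·⟩_{ℓ,↓;p} is Schur²-convex on ℝ^k for every p ∈ [2, ∞]. -/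
open MeasureTheory ProbabilityTheory Filter
open scoped ENNReal

noncomputable section

/-- The absolute values `|x₁|, …, |x_k|` sorted in nondecreasing order. -/
noncomputable def absSorted {k : ℕ} (x : Fin k → ℝ) : Fin k → ℝ :=
  (fun i => |x i|) ∘ Tuple.sort (fun i => |x i|)

/-- The vector in `ℝ^ℓ` of the `ℓ` smallest of the absolute values `|x₁|, …, |x_k|`. -/
noncomputable def smallestAbs {k : ℕ} (ℓ : ℕ) (hℓ : ℓ ≤ k) (x : Fin k → ℝ) :
    Fin ℓ → ℝ :=
  fun j => absSorted x (Fin.castLE hℓ j)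

/-- The vector in `ℝ^ℓ` of the `ℓ` largest of the absolute values `|x₁|, …, |x_k|`. -/
noncomputable def largestAbs {k : ℕ} (ℓ : ℕ) (hℓ : ℓ ≤ k) (x : Fin k → ℝ) :
    Fin ℓ → ℝ :=
  fun j => absSorted x ⟨k - ℓ + j.1, by have := j.2; omega⟩

/-!
Let `a` and `b` be the squares of the coordinates of `x` and `y`, sorted nondecreasingly. If `x²`
majorizes `y²`, each sum of the `m` smallest entries of `a` is at most the corresponding sum for
`b`, and each sum of the `m` largest entries of `b` is at most that for `a`. The `p`-mean of the
`ℓ` smallest `|xᵢ|` is an increasing function of `∑ g (aᵢ)` for an increasing concave `g`: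
`t ^ (p / 2)` if `0 < p ≤ 2`, `-t ^ (p / 2)` if `p < 0`, and `log` if `p = 0`. Likewise the `p`-mean
of the `ℓ` largest is an increasing function of `∑ g (aᵢ)` for the increasing convex
`g t = t ^ (p / 2)`, `p ≥ 2`. Tomić's inequality (Abel summation against the slopes of supporting
lines of `g`, which decrease along the sorted sequences) turns the comparison of partial sums into
the comparison of these sums. For `p = ±∞` only the extreme entry matters.
-/

open Finset

lemma one_add_mul_self_le_rpow_one_add_of_nonpos {s : ℝ} (hs : -1 < s) {p : ℝ} (hp : p ≤ 0) :
    1 + p * s ≤ (1 + s) ^ p := by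
  have hy : 0 < 1 + s := by linarith
  -- Bernoulli with the exponent `1 - p ≥ 1` at the point `(1 + s)⁻¹ - 1`
  have hb := one_add_mul_self_le_rpow_one_add (s := (1 + s)⁻¹ - 1)
    (by linarith [inv_pos.2 hy]) (p := 1 - p) (by linarith)
  rw [add_sub_cancel, Real.inv_rpow hy.le, ← Real.rpow_neg hy.le, neg_sub] at hb
  calc 1 + p * s = (1 + s) * (1 + (1 - p) * ((1 + s)⁻¹ - 1)) := by field_simp; ring
    _ ≤ (1 + s) * (1 + s) ^ (p - 1) := by gcongr
    _ = (1 + s) ^ p := by rw [Real.rpow_sub_one hy.ne']; field_simp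

-- `s ^ q + q * s ^ (q - 1) * (t - s)` is the tangent line of `t ↦ t ^ q` at `s`; the three
-- comparisons below are Bernoulli's inequality at `t / s - 1`.
lemma rpow_tangent_eq {q s : ℝ} (hs : 0 < s) (t : ℝ) :
    s ^ q + q * s ^ (q - 1) * (t - s) = s ^ q * (1 + q * (t / s - 1)) := by
  rw [Real.rpow_sub_one hs.ne']; field_simp

lemma rpow_eq_mul_one_add_rpow {q s t : ℝ} (hs : 0 < s) (ht : 0 ≤ t) :
    t ^ q = s ^ q * (1 + (t / s - 1)) ^ q := by
  rw [add_sub_cancel, Real.div_rpow ht hs.le, mul_div_cancel₀ _ (Real.rpow_pos_of_pos hs q).ne']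

lemma rpow_le_tangent_of_le_one {q s t : ℝ} (hq0 : 0 ≤ q) (hq1 : q ≤ 1) (hs : 0 < s)
    (ht : 0 ≤ t) : t ^ q ≤ s ^ q + q * s ^ (q - 1) * (t - s) := by
  rw [rpow_tangent_eq hs, rpow_eq_mul_one_add_rpow hs ht]
  gcongr
  exact rpow_one_add_le_one_add_mul_self (by linarith [div_nonneg ht hs.le]) hq0 hq1

lemma tangent_le_rpow_of_nonpos {q s t : ℝ} (hq : q ≤ 0) (hs : 0 < s)
    (ht : 0 < t) : s ^ q + q * s ^ (q - 1) * (t - s) ≤ t ^ q := by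
  rw [rpow_tangent_eq hs, rpow_eq_mul_one_add_rpow hs ht.le]
  gcongr
  exact one_add_mul_self_le_rpow_one_add_of_nonpos (by linarith [div_pos ht hs]) hq

lemma tangent_le_rpow_of_one_le {q s t : ℝ} (hq : 1 ≤ q) (hs : 0 ≤ s)
    (ht : 0 ≤ t) : s ^ q + q * s ^ (q - 1) * (t - s) ≤ t ^ q := by
  obtain rfl | hs := hs.eq_or_lt
  · obtain rfl | hq := hq.eq_or_lt
    · simp
    · rw [Real.zero_rpow (by linarith), Real.zero_rpow (by linarith)]
      simpa using Real.rpow_nonneg ht q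
  rw [rpow_tangent_eq hs, rpow_eq_mul_one_add_rpow hs ht]
  gcongr
  exact one_add_mul_self_le_rpow_one_add (by linarith [div_nonneg ht hs.le]) hq

lemma log_le_log_add_inv_mul_sub {s t : ℝ} (hs : 0 < s) (ht : 0 < t) :
    Real.log t ≤ Real.log s + s⁻¹ * (t - s) := by
  have h := Real.log_le_sub_one_of_pos (div_pos ht hs)
  rw [Real.log_div ht.ne' hs.ne'] at h
  have : t / s - 1 = s⁻¹ * (t - s) := by field_simp
  linarith

lemma abs_rpow_eq_sq_rpow (t c : ℝ) : |t| ^ c = (t ^ 2) ^ (c / 2) := by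
  rw [← sq_abs, ← Real.rpow_natCast, ← Real.rpow_mul (abs_nonneg t)]
  norm_num [mul_div_cancel₀]

def PartialSumsLE (n : ℕ) (u v : ℕ → ℝ) : Prop :=
  ∀ j ≤ n, ∑ i ∈ range j, u i ≤ ∑ i ∈ range j, v i

lemma sum_mul_nonneg_of_antitoneOn {n : ℕ} {c d : ℕ → ℝ} (hc0 : ∀ i < n, 0 ≤ c i)
    (hc : AntitoneOn c (Set.Iio n)) (hd : ∀ j ≤ n, 0 ≤ ∑ i ∈ range j, d i) :
    0 ≤ ∑ i ∈ range n, c i * d i := by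
  obtain rfl | hn := n.eq_zero_or_pos
  · simp
  have hparts := sum_range_by_parts c d n
  simp only [smul_eq_mul] at hparts
  rw [hparts, sub_nonneg]
  calc ∑ i ∈ range (n - 1), (c (i + 1) - c i) * ∑ j ∈ range (i + 1), d j ≤ 0 :=
        sum_nonpos fun i hi => by
          rw [mem_range] at hi
          exact mul_nonpos_of_nonpos_of_nonneg
            (sub_nonpos.2 (hc (Set.mem_Iio.2 (by omega)) (Set.mem_Iio.2 (by omega)) (by omega)))
            (hd _ (by omega))
    _ ≤ c (n - 1) * ∑ i ∈ range n, d i := mul_nonneg (hc0 _ (by omega)) (hd n le_rfl)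

namespace PartialSumsLE

variable {n : ℕ} {u v : ℕ → ℝ}

lemma mono {m : ℕ} (huv : PartialSumsLE m u v) (hnm : n ≤ m) : PartialSumsLE n u v :=
  fun j hj => huv j (hj.trans hnm)

lemma head_le (huv : PartialSumsLE n u v) (hn : 0 < n) : u 0 ≤ v 0 := by
  simpa using huv 1 hn

lemma pos_of_pos (huv : PartialSumsLE n u v) (hu : ∀ i < n, 0 < u i)
    (hv : MonotoneOn v (Set.Iio n)) : ∀ i < n, 0 < v i := fun i hi =>
  (hu 0 (by omega)).trans_le ((huv.head_le (by omega)).trans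
    (hv (Set.mem_Iio.2 (by omega)) (Set.mem_Iio.2 hi) i.zero_le))

/-- Tomić's inequality. -/
lemma sum_comp_le_of_tangent {g : ℝ → ℝ} {c : ℕ → ℝ} (huv : PartialSumsLE n u v)
    (hc0 : ∀ i < n, 0 ≤ c i) (hc : AntitoneOn c (Set.Iio n))
    (hg : ∀ i < n, g (u i) + c i * (v i - u i) ≤ g (v i)) :
    ∑ i ∈ range n, g (u i) ≤ ∑ i ∈ range n, g (v i) := by
  have habel : 0 ≤ ∑ i ∈ range n, c i * (v i - u i) :=
    sum_mul_nonneg_of_antitoneOn hc0 hc fun j hj => by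
      simpa [sum_sub_distrib] using huv j hj
  have htangent := sum_le_sum fun i hi => hg i (mem_range.1 hi)
  rw [sum_add_distrib] at htangent
  linarith

lemma sum_rpow_le_of_le_one {q : ℝ} (hq0 : 0 < q) (hq1 : q ≤ 1) (huv : PartialSumsLE n u v)
    (hu : ∀ i < n, 0 ≤ u i) (hv0 : ∀ i < n, 0 ≤ v i) (hv : MonotoneOn v (Set.Iio n)) :
    ∑ i ∈ range n, u i ^ q ≤ ∑ i ∈ range n, v i ^ q := by
  induction n generalizing u v with
  | zero => simp
  | succ n ih =>
    obtain hzero | hpos := (hv0 0 n.succ_pos).eq_or_lt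
    · -- the tangent at `0` is vertical; instead drop the vanishing first terms of `u` and `v`
      have hu0 : u 0 = 0 := le_antisymm (hzero ▸ huv.head_le n.succ_pos) (hu 0 n.succ_pos)
      rw [sum_range_succ', sum_range_succ', hu0, ← hzero]
      refine (add_le_add_iff_right _).2 (ih (fun j hj => ?_) (fun i hi => hu (i + 1) (by omega))
        (fun i hi => hv0 (i + 1) (by omega)) fun i hi j hj hij =>
          hv (Set.mem_Iio.2 (by simp at hi; omega)) (Set.mem_Iio.2 (by simp at hj; omega))
            (by omega))
      simpa [sum_range_succ', hu0, ← hzero] using huv (j + 1) (by omega)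
    have hvpos : ∀ i < n + 1, 0 < v i := fun i hi =>
      hpos.trans_le (hv (Set.mem_Iio.2 n.succ_pos) (Set.mem_Iio.2 hi) i.zero_le)
    refine huv.sum_comp_le_of_tangent (g := (· ^ q)) (c := fun i => q * v i ^ (q - 1))
      (fun i hi => mul_nonneg hq0.le (Real.rpow_nonneg (hv0 i hi) _))
      (fun i hi j hj hij => mul_le_mul_of_nonneg_left
        (Real.rpow_le_rpow_of_nonpos (hvpos i hi) (hv hi hj hij) (by linarith)) hq0.le)
      fun i hi => by linarith [rpow_le_tangent_of_le_one hq0.le hq1 (hvpos i hi) (hu i hi)]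

lemma sum_rpow_le_of_nonpos {q : ℝ} (hq : q ≤ 0) (huv : PartialSumsLE n u v)
    (hu : ∀ i < n, 0 < u i) (hv0 : ∀ i < n, 0 < v i) (hv : MonotoneOn v (Set.Iio n)) :
    ∑ i ∈ range n, v i ^ q ≤ ∑ i ∈ range n, u i ^ q := by
  have := huv.sum_comp_le_of_tangent (g := fun t => -t ^ q) (c := fun i => -q * v i ^ (q - 1))
    (fun i hi => mul_nonneg (neg_nonneg.2 hq) (Real.rpow_nonneg (hv0 i hi).le _))
    (fun i hi j hj hij => mul_le_mul_of_nonneg_left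
      (Real.rpow_le_rpow_of_nonpos (hv0 i hi) (hv hi hj hij) (by linarith)) (neg_nonneg.2 hq))
    fun i hi => by linarith [tangent_le_rpow_of_nonpos hq (hv0 i hi) (hu i hi)]
  simpa [sum_neg_distrib] using this

lemma prod_le (huv : PartialSumsLE n u v) (hu : ∀ i < n, 0 < u i) (hv0 : ∀ i < n, 0 < v i)
    (hv : MonotoneOn v (Set.Iio n)) : ∏ i ∈ range n, u i ≤ ∏ i ∈ range n, v i := by
  have hlog := huv.sum_comp_le_of_tangent (g := Real.log) (c := fun i => (v i)⁻¹)
    (fun i hi => (inv_pos.2 (hv0 i hi)).le)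
    (fun i hi j hj hij => inv_anti₀ (hv0 i hi) (hv hi hj hij))
    fun i hi => by linarith [log_le_log_add_inv_mul_sub (hv0 i hi) (hu i hi)]
  rwa [← Real.log_prod (fun i hi => (hu i (mem_range.1 hi)).ne'),
    ← Real.log_prod (fun i hi => (hv0 i (mem_range.1 hi)).ne'),
    Real.log_le_log_iff (prod_pos fun i hi => hu i (mem_range.1 hi))
      (prod_pos fun i hi => hv0 i (mem_range.1 hi))] at hlog

lemma sum_rpow_le_of_one_le {q : ℝ} (hq : 1 ≤ q) (huv : PartialSumsLE n u v)
    (hu0 : ∀ i < n, 0 ≤ u i) (hu : AntitoneOn u (Set.Iio n)) (hv : ∀ i < n, 0 ≤ v i) :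
    ∑ i ∈ range n, u i ^ q ≤ ∑ i ∈ range n, v i ^ q :=
  huv.sum_comp_le_of_tangent (g := (· ^ q)) (c := fun i => q * u i ^ (q - 1))
    (fun i hi => mul_nonneg (by linarith) (Real.rpow_nonneg (hu0 i hi) _))
    (fun i hi j hj hij => mul_le_mul_of_nonneg_left
      (Real.rpow_le_rpow (hu0 j hj) (hu hi hj hij) (by linarith)) (by linarith))
    fun i hi => tangent_le_rpow_of_one_le hq (hu0 i hi) (hv i hi)

end PartialSumsLE

lemma Finset.sum_le_sum_of_card_eq {ι M : Type*} [DecidableEq ι] [AddCommMonoid M] [LinearOrder M]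
    [IsOrderedCancelAddMonoid M] {s t : Finset ι} {f : ι → M} (hst : #s = #t)
    (h : ∀ i ∈ s \ t, ∀ j ∈ t \ s, f i ≤ f j) : ∑ i ∈ s, f i ≤ ∑ i ∈ t, f i := by
  rw [← sum_sdiff_le_sum_sdiff]
  obtain hs | hs := (s \ t).eq_empty_or_nonempty
  · have ht : t \ s = ∅ := card_eq_zero.1 (by rw [← card_sdiff_comm hst, hs, card_empty])
    simp [hs, ht]
  obtain ⟨i, hi, hmax⟩ := exists_max_image (s \ t) f hs
  calc ∑ j ∈ s \ t, f j ≤ #(s \ t) • f i := sum_le_card_nsmul _ _ _ hmax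
    _ = #(t \ s) • f i := by rw [card_sdiff_comm hst]
    _ ≤ ∑ j ∈ t \ s, f j := card_nsmul_le_sum _ _ _ fun j hj => h i hi j hj

lemma Monotone.sum_filter_lt_card_le {k : ℕ} {M : Type*} [AddCommMonoid M] [LinearOrder M]
    [IsOrderedCancelAddMonoid M] {w : Fin k → M} (hw : Monotone w) (s : Finset (Fin k)) :
    ∑ i ∈ {i : Fin k | ↑i < #s}, w i ≤ ∑ i ∈ s, w i := by
  refine sum_le_sum_of_card_eq ?_ fun i hi j hj => hw ?_
  · rw [Fin.card_filter_val_lt, min_eq_right (card_le_univ s |>.trans_eq (Fintype.card_fin k))]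
  · simp only [Finset.mem_sdiff, mem_filter_univ, not_lt] at hi hj
    rw [Fin.le_def]
    omega

lemma sum_range_sub_one_sub {M : Type*} [AddCommMonoid M] (f : ℕ → M) {m k : ℕ} (hm : m ≤ k) :
    ∑ i ∈ range m, f (k - 1 - i) = ∑ i ∈ range m, f (k - m + i) := by
  rw [← sum_range_reflect (fun i => f (k - m + i)) m]
  refine sum_congr rfl fun i hi => ?_
  rw [mem_range] at hi
  congr 1
  omega

lemma sum_range_eq_add_sum_range_sub_one_sub {M : Type*} [AddCommMonoid M] (f : ℕ → M) {m k : ℕ}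
    (hm : m ≤ k) :
    ∑ i ∈ range k, f i = ∑ i ∈ range (k - m), f i + ∑ i ∈ range m, f (k - 1 - i) := by
  rw [sum_range_sub_one_sub f hm, ← sum_range_add, Nat.sub_add_cancel hm]

section SortedSquares

variable {k : ℕ}

def sortedSq (x : Fin k → ℝ) (i : ℕ) : ℝ :=
  if h : i < k then absSorted x ⟨i, h⟩ ^ 2 else 0

lemma absSorted_monotone (x : Fin k → ℝ) : Monotone (absSorted x) :=
  Tuple.monotone_sort _

lemma monotone_sq_absSorted (x : Fin k → ℝ) : Monotone fun i => absSorted x i ^ 2 :=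
  fun _ _ hij => pow_le_pow_left₀ (abs_nonneg _) (absSorted_monotone x hij) 2

lemma sq_absSorted (x : Fin k → ℝ) (i : Fin k) :
    absSorted x i ^ 2 = sqv x (Tuple.sort (fun i => |x i|) i) := by
  simp [absSorted, sqv]

lemma sum_sq_absSorted (x : Fin k → ℝ) : ∑ i, absSorted x i ^ 2 = ∑ i, sqv x i := by
  simp only [sq_absSorted]
  exact Equiv.sum_comp _ _

lemma sum_sq_absSorted_le_sum_sqv (x : Fin k → ℝ) (s : Finset (Fin k)) :
    ∑ i ∈ {i : Fin k | ↑i < #s}, absSorted x i ^ 2 ≤ ∑ i ∈ s, sqv x i := by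
  let σ := Tuple.sort (fun i => |x i|)
  calc _ ≤ ∑ i ∈ s.map σ.symm.toEmbedding, absSorted x i ^ 2 := by
        simpa using (monotone_sq_absSorted x).sum_filter_lt_card_le (s.map σ.symm.toEmbedding)
    _ = ∑ i ∈ s, sqv x i := by simp [sq_absSorted, σ]

lemma sortedSq_nonneg (x : Fin k → ℝ) (i : ℕ) : 0 ≤ sortedSq x i := by
  unfold sortedSq
  split <;> positivity

lemma sortedSq_monotoneOn (x : Fin k → ℝ) : MonotoneOn (sortedSq x) (Set.Iio k) :=
  fun i hi j hj hij => by
    rw [sortedSq, sortedSq, dif_pos (Set.mem_Iio.1 hi), dif_pos (Set.mem_Iio.1 hj)]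
    exact monotone_sq_absSorted x (Fin.le_def.2 hij)

lemma sortedSq_rev_antitoneOn (x : Fin k → ℝ) :
    AntitoneOn (fun i => sortedSq x (k - 1 - i)) (Set.Iio k) := fun i hi j hj hij => by
  rw [Set.mem_Iio] at hi hj
  exact sortedSq_monotoneOn x (Set.mem_Iio.2 (by omega)) (Set.mem_Iio.2 (by omega)) (by omega)

lemma sum_range_sortedSq_eq_sum_filter (x : Fin k → ℝ) {m : ℕ} (hm : m ≤ k) :
    ∑ i ∈ range m, sortedSq x i = ∑ i ∈ {i : Fin k | ↑i < m}, absSorted x i ^ 2 := by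
  have hrange : range m = ({i : Fin k | ↑i < m} : Finset _).map Fin.valEmbedding := by
    ext j
    simp only [mem_range, Finset.mem_map, mem_filter_univ, Fin.valEmbedding_apply]
    exact ⟨fun hj => ⟨⟨j, by omega⟩, hj, rfl⟩, by rintro ⟨i, hi, rfl⟩; exact hi⟩
  rw [hrange, sum_map]
  exact sum_congr rfl fun i _ => dif_pos i.2

lemma sum_range_sortedSq (x : Fin k → ℝ) : ∑ i ∈ range k, sortedSq x i = ∑ i, sqv x i := by
  rw [sum_range_sortedSq_eq_sum_filter x le_rfl, ← sum_sq_absSorted]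
  exact sum_congr (filter_true_of_mem fun i _ => i.2) fun _ _ => rfl

lemma Majorizes.partialSumsLE {x y : Fin k → ℝ} (h : Majorizes (sqv x) (sqv y)) :
    PartialSumsLE k (sortedSq x) (sortedSq y) := by
  intro m hm
  -- pass to complements: some `k - m` squares of `x` dominate the `k - m` largest squares of `y`
  let σ := Tuple.sort (fun i => |y i|)
  let B : Finset (Fin k) := {i | ↑i < m}
  obtain ⟨t, ht, hyt⟩ := h.2 (Bᶜ.map σ.toEmbedding)
  have hcard : #tᶜ = m := by
    rw [card_compl, ht, card_map, card_compl, Fintype.card_fin, Fin.card_filter_val_lt]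
    omega
  have hx : ∑ i ∈ B, absSorted x i ^ 2 ≤ ∑ i ∈ tᶜ, sqv x i := by
    simpa [hcard] using sum_sq_absSorted_le_sum_sqv x tᶜ
  have hy : ∑ i ∈ Bᶜ.map σ.toEmbedding, sqv y i = ∑ i ∈ Bᶜ, absSorted y i ^ 2 := by
    simp [sq_absSorted, σ]
  rw [sum_range_sortedSq_eq_sum_filter x hm, sum_range_sortedSq_eq_sum_filter y hm]
  have htot := h.1
  rw [← sum_compl_add_sum t, ← sum_sq_absSorted, ← sum_compl_add_sum B] at htot
  linarith

lemma Majorizes.partialSumsLE_rev {x y : Fin k → ℝ} (h : Majorizes (sqv x) (sqv y)) :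
    PartialSumsLE k (fun i => sortedSq y (k - 1 - i)) (fun i => sortedSq x (k - 1 - i)) := by
  intro m hm
  have hbot := h.partialSumsLE (k - m) (by omega)
  have htot := h.1
  rw [← sum_range_sortedSq, ← sum_range_sortedSq, sum_range_eq_add_sum_range_sub_one_sub _ hm,
    sum_range_eq_add_sum_range_sub_one_sub _ hm] at htot
  linarith

end SortedSquares

section PMean

variable {m : ℕ} (z : Fin m → ℝ)

lemma pMean_nonneg (p : EReal) : 0 ≤ pMean p z := by
  unfold pMean
  split_ifs
  · exact Real.iSup_nonneg fun j => abs_nonneg _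
  · exact Real.iInf_nonneg fun j => abs_nonneg _
  all_goals positivity

lemma pMean_top : pMean ⊤ z = ⨆ j, |z j| := by simp [pMean]

lemma pMean_bot : pMean ⊥ z = ⨅ j, |z j| := by simp [pMean]

lemma pMean_zero : pMean 0 z = ∏ j, |z j| ^ (m : ℝ)⁻¹ := by simp [pMean]

lemma pMean_coe_of_pos_s19 {c : ℝ} (hc : 0 < c) :
    pMean c z = ((m : ℝ)⁻¹ * ∑ j, |z j| ^ c) ^ c⁻¹ := by
  simp [pMean, hc.ne', hc.not_gt]

lemma pMean_coe_of_forall_ne_zero {c : ℝ} (hc : c ≠ 0) (hz : ∀ j, z j ≠ 0) :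
    pMean c z = ((m : ℝ)⁻¹ * ∑ j, |z j| ^ c) ^ c⁻¹ := by
  simp [pMean, hc, hz]

variable {z} in
lemma pMean_coe_eq_zero {c : ℝ} (hc : c ≤ 0) (hz : ∃ j, z j = 0) : pMean c z = 0 := by
  obtain ⟨j, hj⟩ := hz
  obtain hc | rfl := hc.lt_or_eq
  · rw [pMean, if_neg (EReal.coe_ne_top c), if_neg (EReal.coe_ne_bot c),
      if_neg (EReal.coe_ne_zero.2 hc.ne), if_pos ⟨hc, j, hj⟩]
  · rw [EReal.coe_zero, pMean_zero]
    exact prod_eq_zero (mem_univ j) (by simp [hj, j.pos.ne'])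

variable {z} {w : Fin m → ℝ}

lemma pMean_coe_le_pMean_coe_of_pos {c : ℝ} (hc : 0 < c)
    (h : ∑ j, |z j| ^ c ≤ ∑ j, |w j| ^ c) : pMean c z ≤ pMean c w := by
  rw [pMean_coe_of_pos_s19 _ hc, pMean_coe_of_pos_s19 _ hc]
  gcongr

lemma pMean_coe_le_pMean_coe_of_neg {c : ℝ} (hc : c < 0) (hz : ∀ j, z j ≠ 0) (hw : ∀ j, w j ≠ 0)
    (h : ∑ j, |w j| ^ c ≤ ∑ j, |z j| ^ c) : pMean c z ≤ pMean c w := by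
  rw [pMean_coe_of_forall_ne_zero _ hc.ne hz, pMean_coe_of_forall_ne_zero _ hc.ne hw]
  obtain hempty | hne := isEmpty_or_nonempty (Fin m)
  · simp
  have hm : 0 < m := Fin.pos_iff_nonempty.2 hne
  refine Real.rpow_le_rpow_of_nonpos (mul_pos (by positivity)
    (sum_pos (fun j _ => Real.rpow_pos_of_pos (abs_pos.2 (hw j)) _) univ_nonempty)) ?_
    (inv_nonpos.2 hc.le)
  gcongr

lemma pMean_zero_le_pMean_zero (h : ∏ j, |z j| ≤ ∏ j, |w j|) : pMean 0 z ≤ pMean 0 w := by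
  rw [pMean_zero, pMean_zero, Real.finsetProd_rpow _ _ fun j _ => abs_nonneg (z j),
    Real.finsetProd_rpow _ _ fun j _ => abs_nonneg (w j)]
  gcongr

end PMean

section Extremes

variable {k ℓ : ℕ} (hℓk : ℓ ≤ k)

lemma sq_smallestAbs (x : Fin k → ℝ) (j : Fin ℓ) : smallestAbs ℓ hℓk x j ^ 2 = sortedSq x j := by
  rw [sortedSq, dif_pos (j.2.trans_le hℓk)]; rfl

lemma sq_largestAbs (x : Fin k → ℝ) (j : Fin ℓ) :
    largestAbs ℓ hℓk x j ^ 2 = sortedSq x (k - ℓ + j) := by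
  rw [sortedSq, dif_pos (by omega)]; rfl

lemma smallestAbs_nonneg (x : Fin k → ℝ) (j : Fin ℓ) : 0 ≤ smallestAbs ℓ hℓk x j :=
  abs_nonneg _

lemma largestAbs_nonneg (x : Fin k → ℝ) (j : Fin ℓ) : 0 ≤ largestAbs ℓ hℓk x j :=
  abs_nonneg _

lemma smallestAbs_monotone (x : Fin k → ℝ) : Monotone (smallestAbs ℓ hℓk x) :=
  fun _ _ hij => absSorted_monotone x hij

lemma largestAbs_monotone (x : Fin k → ℝ) : Monotone (largestAbs ℓ hℓk x) :=
  fun _ _ hij => absSorted_monotone x (by rw [Fin.le_def] at hij ⊢; simp; omega)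

lemma smallestAbs_ne_zero_iff (x : Fin k → ℝ) :
    (∀ j, smallestAbs ℓ hℓk x j ≠ 0) ↔ ∀ i < ℓ, 0 < sortedSq x i := by
  refine ⟨fun hx i hi => ?_, fun hx j hj => ?_⟩
  · rw [← sq_smallestAbs hℓk x ⟨i, hi⟩]
    exact pow_pos ((smallestAbs_nonneg hℓk x _).lt_of_ne (hx _).symm) 2
  · have := hx j j.2
    rw [← sq_smallestAbs hℓk x j, hj] at this
    simp at this

lemma sum_abs_smallestAbs_rpow (x : Fin k → ℝ) (c : ℝ) :
    ∑ j, |smallestAbs ℓ hℓk x j| ^ c = ∑ i ∈ range ℓ, sortedSq x i ^ (c / 2) := by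
  simp only [abs_rpow_eq_sq_rpow, sq_smallestAbs]
  exact Fin.sum_univ_eq_sum_range (fun i => sortedSq x i ^ (c / 2)) ℓ

lemma sum_abs_largestAbs_rpow (x : Fin k → ℝ) (c : ℝ) :
    ∑ j, |largestAbs ℓ hℓk x j| ^ c = ∑ i ∈ range ℓ, sortedSq x (k - 1 - i) ^ (c / 2) := by
  simp only [abs_rpow_eq_sq_rpow, sq_largestAbs]
  rw [sum_range_sub_one_sub (fun i => sortedSq x i ^ (c / 2)) hℓk]
  exact Fin.sum_univ_eq_sum_range (fun i => sortedSq x (k - ℓ + i) ^ (c / 2)) ℓ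

lemma prod_abs_smallestAbs (x : Fin k → ℝ) :
    ∏ j, |smallestAbs ℓ hℓk x j| = √(∏ i ∈ range ℓ, sortedSq x i) := by
  rw [← Real.sqrt_sq (prod_nonneg fun j _ => abs_nonneg _), ← prod_pow]
  simp only [sq_abs, sq_smallestAbs]
  rw [Fin.prod_univ_eq_prod_range (sortedSq x) ℓ]

end Extremes

section Schur

variable {k ℓ : ℕ} (hℓk : ℓ ≤ k) {x y : Fin k → ℝ}

lemma pMean_bot_smallestAbs_le (h : Majorizes (sqv x) (sqv y)) (hℓ : 0 < ℓ) :
    pMean ⊥ (smallestAbs ℓ hℓk x) ≤ pMean ⊥ (smallestAbs ℓ hℓk y) := by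
  have : Nonempty (Fin ℓ) := ⟨⟨0, hℓ⟩⟩
  have hhead : smallestAbs ℓ hℓk x ⟨0, hℓ⟩ ≤ smallestAbs ℓ hℓk y ⟨0, hℓ⟩ := by
    refine (pow_le_pow_iff_left₀ (smallestAbs_nonneg hℓk x _) (smallestAbs_nonneg hℓk y _)
      two_ne_zero).1 ?_
    rw [sq_smallestAbs, sq_smallestAbs]
    exact h.partialSumsLE.head_le (hℓ.trans_le hℓk)
  rw [pMean_bot, pMean_bot]
  refine le_ciInf fun j => (ciInf_le (Set.finite_range _).bddBelow ⟨0, hℓ⟩).trans ?_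
  exact abs_le_abs_of_nonneg (smallestAbs_nonneg hℓk x _)
    (hhead.trans (smallestAbs_monotone hℓk y (Nat.zero_le j)))

lemma pMean_smallestAbs_le_of_pos (h : Majorizes (sqv x) (sqv y)) {c : ℝ} (hc0 : 0 < c)
    (hc2 : c ≤ 2) : pMean c (smallestAbs ℓ hℓk x) ≤ pMean c (smallestAbs ℓ hℓk y) := by
  refine pMean_coe_le_pMean_coe_of_pos hc0 ?_
  rw [sum_abs_smallestAbs_rpow, sum_abs_smallestAbs_rpow]
  exact (h.partialSumsLE.mono hℓk).sum_rpow_le_of_le_one (by positivity) (by linarith)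
    (fun i _ => sortedSq_nonneg x i) (fun i _ => sortedSq_nonneg y i)
    ((sortedSq_monotoneOn y).mono (Set.Iio_subset_Iio hℓk))

lemma pMean_smallestAbs_le_of_nonpos (h : Majorizes (sqv x) (sqv y)) {c : ℝ} (hc : c ≤ 0) :
    pMean c (smallestAbs ℓ hℓk x) ≤ pMean c (smallestAbs ℓ hℓk y) := by
  by_cases hx : ∃ j, smallestAbs ℓ hℓk x j = 0
  · rw [pMean_coe_eq_zero hc hx]
    exact pMean_nonneg _ _
  push Not at hx
  have huv := h.partialSumsLE.mono hℓk
  have hmono := (sortedSq_monotoneOn y).mono (Set.Iio_subset_Iio hℓk)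
  have hu := (smallestAbs_ne_zero_iff hℓk x).1 hx
  have hv := huv.pos_of_pos hu hmono
  obtain hc | rfl := hc.lt_or_eq
  · refine pMean_coe_le_pMean_coe_of_neg hc hx ((smallestAbs_ne_zero_iff hℓk y).2 hv) ?_
    rw [sum_abs_smallestAbs_rpow, sum_abs_smallestAbs_rpow]
    exact huv.sum_rpow_le_of_nonpos (by linarith) hu hv hmono
  · refine pMean_zero_le_pMean_zero ?_
    rw [prod_abs_smallestAbs, prod_abs_smallestAbs]
    exact Real.sqrt_le_sqrt (huv.prod_le hu hv hmono)

lemma pMean_top_largestAbs_le (h : Majorizes (sqv x) (sqv y)) (hℓ : 0 < ℓ) :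
    pMean ⊤ (largestAbs ℓ hℓk y) ≤ pMean ⊤ (largestAbs ℓ hℓk x) := by
  have : Nonempty (Fin ℓ) := ⟨⟨0, hℓ⟩⟩
  let last : Fin ℓ := ⟨ℓ - 1, by omega⟩
  have hlast : largestAbs ℓ hℓk y last ≤ largestAbs ℓ hℓk x last := by
    refine (pow_le_pow_iff_left₀ (largestAbs_nonneg hℓk y _) (largestAbs_nonneg hℓk x _)
      two_ne_zero).1 ?_
    rw [sq_largestAbs, sq_largestAbs, show k - ℓ + (ℓ - 1) = k - 1 - 0 by omega]
    exact h.partialSumsLE_rev.head_le (hℓ.trans_le hℓk)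
  rw [pMean_top, pMean_top]
  refine ciSup_le fun j => le_trans ?_ (le_ciSup (Set.finite_range _).bddAbove last)
  exact abs_le_abs_of_nonneg (largestAbs_nonneg hℓk y _)
    ((largestAbs_monotone hℓk y (Nat.le_sub_one_of_lt j.2)).trans hlast)

lemma pMean_largestAbs_le_of_two_le (h : Majorizes (sqv x) (sqv y)) {c : ℝ} (hc : 2 ≤ c) :
    pMean c (largestAbs ℓ hℓk y) ≤ pMean c (largestAbs ℓ hℓk x) := by
  refine pMean_coe_le_pMean_coe_of_pos (by linarith) ?_
  rw [sum_abs_largestAbs_rpow, sum_abs_largestAbs_rpow]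
  exact (h.partialSumsLE_rev.mono hℓk).sum_rpow_le_of_one_le (by linarith)
    (fun i _ => sortedSq_nonneg y _) ((sortedSq_rev_antitoneOn y).mono (Set.Iio_subset_Iio hℓk))
    (fun i _ => sortedSq_nonneg x _)

theorem pMean_smallestAbs_le (h : Majorizes (sqv x) (sqv y)) {p : EReal} (hp : p ≤ 2) :
    pMean p (smallestAbs ℓ hℓk x) ≤ pMean p (smallestAbs ℓ hℓk y) := by
  obtain rfl | hℓ := ℓ.eq_zero_or_pos
  · exact (congrArg (pMean p) (Subsingleton.elim _ _)).le
  induction p using EReal.rec with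
  | bot => exact pMean_bot_smallestAbs_le hℓk h hℓ
  | coe c =>
    obtain hc | hc := le_or_gt c 0
    · exact pMean_smallestAbs_le_of_nonpos hℓk h hc
    · exact pMean_smallestAbs_le_of_pos hℓk h hc (EReal.coe_le_coe_iff.1 hp)
  | top => exact ((EReal.coe_lt_top 2).not_ge hp).elim

theorem pMean_largestAbs_le (h : Majorizes (sqv x) (sqv y)) {p : EReal} (hp : 2 ≤ p) :
    pMean p (largestAbs ℓ hℓk y) ≤ pMean p (largestAbs ℓ hℓk x) := by
  obtain rfl | hℓ := ℓ.eq_zero_or_pos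
  · exact (congrArg (pMean p) (Subsingleton.elim _ _)).le
  induction p using EReal.rec with
  | bot => exact ((EReal.bot_lt_coe 2).not_ge hp).elim
  | coe c => exact pMean_largestAbs_le_of_two_le hℓk h (EReal.coe_le_coe_iff.1 hp)
  | top => exact pMean_top_largestAbs_le hℓk h hℓ

end Schur

theorem pMean_smallest_largest_schur2_general (k : ℕ)
    (ℓ : ℕ) (hℓk : ℓ ≤ k) :
    (∀ p : EReal, p ≤ 2 →
      Schur2Concave (fun x : Fin k → ℝ => pMean p (smallestAbs ℓ hℓk x))) ∧
    (∀ p : EReal, 2 ≤ p →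
      Schur2Convex (fun x : Fin k → ℝ => pMean p (largestAbs ℓ hℓk x))) :=
  ⟨fun _ hp _ _ h => pMean_smallestAbs_le hℓk h hp,
    fun _ hp _ _ h => pMean_largestAbs_le hℓk h hp⟩

/-- `⟨·⟩_{ℓ,↑;p}` (the `p`-mean of the `ℓ` smallest absolute values of the coordinates)
is Schur²-concave for every `p ∈ [-∞,2]`, and `⟨·⟩_{ℓ,↓;p}` (the `p`-mean of the `ℓ`
largest absolute values) is Schur²-convex for every `p ∈ [2,∞]`. -/
theorem pMean_smallest_largest_schur2 (k : ℕ) (hk : 1 ≤ k)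
    (ℓ : ℕ) (hℓ1 : 1 ≤ ℓ) (hℓk : ℓ ≤ k) :
    (∀ p : EReal, p ≤ 2 →
      Schur2Concave (fun x : Fin k → ℝ => pMean p (smallestAbs ℓ hℓk x))) ∧
    (∀ p : EReal, 2 ≤ p →
      Schur2Convex (fun x : Fin k → ℝ => pMean p (largestAbs ℓ hℓk x))) :=
  pMean_smallest_largest_schur2_general k ℓ hℓk
end
end
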